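/- arXiv:1105.5410 — 5 statements merged into one kernel-verified Lean document; each statement's English description precedes it below -/
import Mathlib

section
/- There exist constants ε₀ > 0 and C > 0 such that for every ε ∈ (0, ε₀], every r₀ > 0 and θ₀ ∈ ℝ for which the polar rectangle R with parameters ε, r₀, θ₀ is contained in (0,∞) × [0,π] or in (0,∞) × [−π,0], and for every r₁ > 0 and every t > 0, one has ∫_{r₀}^{r₀+ε} ∫_{{θ : |θ−θ₀| ≤ ε/r₀, |θ| ≤ π}} (t² − r₁² − r² + 2 r₁ r cos θ)₊^{−1/2} · r dθ dr ≤ C · min(t, t^{−1/2}). -/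
open MeasureTheory Real

/-- `(x)₊^{-1/2}`: equals `x^{-1/2}` for `x > 0` and `0` for `x ≤ 0`. -/
noncomputable def negHalfPos (x : ℝ) : ℝ := if 0 < x then x ^ (-(1/2) : ℝ) else 0

/-!
In Cartesian coordinates `x = (r cos θ, r sin θ)` the measure `r dr dθ` is Lebesgue measure and
the integrand is `(t² - |x - (r₁, 0)|²)₊^{-1/2}`, while the polar rectangle lies in the square of
half-side `δ = 2ε` around `r₀ e^{iθ₀}`. After a translation it remains to integrate
`(t² - y₁² - y₂²)₊^{-1/2}` over a square `Q` of half-side `δ`, fibre by fibre. On an interval of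
length `ℓ`, `(s² - x²)₊^{-1/2} ≤ s^{-1/2} ((s - x)₊^{-1/2} + (s + x)₊^{-1/2})` integrates to at
most `4 √(ℓ / s)`, which is `4 √2` over the support `[-s, s]`; integrating over `|y₂| < t` gives
the bound `O(t)`. For `t ≥ 4δ`, integrating first along the coordinate in which the centre of `Q`
is larger, every fibre meeting the disc of radius `t` has `s ≥ t / 4`, giving `O(δ^{3/2} t^{-1/2})`.
-/

open Set Metric
open scoped ENNReal

theorem sqrt_le_sqrt_add_sqrt_sub (a b : ℝ) : √b ≤ √a + √(b - a) := by
  rcases le_total a 0 with ha | ha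
  · rw [sqrt_eq_zero_of_nonpos ha, zero_add]
    exact sqrt_le_sqrt (by linarith)
  rcases le_total b a with hb | hb
  · exact (sqrt_le_sqrt hb).trans (le_add_of_nonneg_right (sqrt_nonneg _))
  rw [sqrt_le_iff]
  refine ⟨by positivity, ?_⟩
  nlinarith [sq_sqrt ha, sq_sqrt (sub_nonneg.2 hb), sqrt_nonneg a, sqrt_nonneg (b - a),
    mul_nonneg (sqrt_nonneg a) (sqrt_nonneg (b - a))]

-- For `x < 0`, `x ^ (-1/2) = |x| ^ (-1/2) * cos (π / 2) = 0`, and `0 ^ (-1/2) = 0`.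
theorem negHalfPos_eq_rpow (x : ℝ) : negHalfPos x = x ^ (-(1/2) : ℝ) := by
  unfold negHalfPos
  split_ifs with hx
  · rfl
  rcases (not_lt.1 hx).lt_or_eq with hneg | rfl
  · rw [rpow_def_of_neg hneg, show -(1/2) * π = -(π / 2) by ring, cos_neg, cos_pi_div_two,
      mul_zero]
  · rw [zero_rpow (by norm_num)]

theorem negHalfPos_nonneg (x : ℝ) : 0 ≤ negHalfPos x := by
  unfold negHalfPos
  split_ifs with hx
  exacts [rpow_nonneg hx.le _, le_rfl]

theorem negHalfPos_of_nonpos {x : ℝ} (hx : x ≤ 0) : negHalfPos x = 0 := if_neg hx.not_gt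

@[fun_prop]
theorem measurable_negHalfPos : Measurable negHalfPos := by
  simp only [funext negHalfPos_eq_rpow]; fun_prop

theorem intervalIntegrable_negHalfPos (a b : ℝ) : IntervalIntegrable negHalfPos volume a b := by
  simpa only [funext negHalfPos_eq_rpow] using
    intervalIntegral.intervalIntegrable_rpow' (a := a) (b := b) (by norm_num : (-1 : ℝ) < -(1/2))

theorem integral_negHalfPos (a b : ℝ) : ∫ x in a..b, negHalfPos x = 2 * (√b - √a) := by
  simp only [negHalfPos_eq_rpow, sqrt_eq_rpow]
  rw [integral_rpow (Or.inl (by norm_num))]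
  norm_num
  ring

theorem integral_negHalfPos_le (a b : ℝ) :
    ∫ x in a..b, negHalfPos x ≤ 2 * √(b - a) := by
  rw [integral_negHalfPos]
  linarith [sqrt_le_sqrt_add_sqrt_sub a b]

theorem negHalfPos_sq_sub_sq_le {s : ℝ} (hs : 0 < s) (x : ℝ) :
    negHalfPos (s ^ 2 - x ^ 2) ≤ (√s)⁻¹ * (negHalfPos (s - x) + negHalfPos (s + x)) := by
  rcases le_or_gt (s ^ 2 - x ^ 2) 0 with h | h
  · rw [negHalfPos_of_nonpos h]
    have := negHalfPos_nonneg (s - x); have := negHalfPos_nonneg (s + x)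
    positivity
  have hx : |x| < s := by nlinarith [sq_abs x, abs_nonneg x]
  obtain ⟨h₁, h₂⟩ := abs_lt.1 hx
  have hinv : ∀ u, s ≤ u → negHalfPos u ≤ (√s)⁻¹ := fun u hu => by
    rw [negHalfPos_eq_rpow, sqrt_eq_rpow, ← rpow_neg hs.le]
    exact rpow_le_rpow_of_nonpos hs hu (by norm_num)
  rw [show s ^ 2 - x ^ 2 = (s - x) * (s + x) by ring, negHalfPos_eq_rpow,
    mul_rpow (by linarith) (by linarith), ← negHalfPos_eq_rpow, ← negHalfPos_eq_rpow]
  have hA := negHalfPos_nonneg (s - x)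
  have hB := negHalfPos_nonneg (s + x)
  have hc : 0 ≤ (√s)⁻¹ := by positivity
  rcases le_total 0 x with hx0 | hx0
  · nlinarith [mul_le_mul_of_nonneg_left (hinv (s + x) (by linarith)) hA, mul_nonneg hc hB]
  · nlinarith [mul_le_mul_of_nonneg_right (hinv (s - x) (by linarith)) hB, mul_nonneg hc hA]

theorem setLIntegral_Icc_negHalfPos_sq_sub_sq_le {s : ℝ} (hs : 0 < s) {p q : ℝ} (hpq : p ≤ q) :
    ∫⁻ x in Icc p q, ENNReal.ofReal (negHalfPos (s ^ 2 - x ^ 2)) ≤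
      ENNReal.ofReal (4 * √(q - p) / √s) := by
  set g : ℝ → ℝ := fun x => (√s)⁻¹ * (negHalfPos (s - x) + negHalfPos (s + x))
  have h₁ : IntervalIntegrable (fun x => negHalfPos (s - x)) volume p q := by
    simpa using (intervalIntegrable_negHalfPos (s - p) (s - q)).comp_sub_left s
  have h₂ : IntervalIntegrable (fun x => negHalfPos (s + x)) volume p q := by
    simpa using (intervalIntegrable_negHalfPos (p + s) (q + s)).comp_add_left s
  have hg_nonneg : ∀ x, 0 ≤ g x := fun x => by
    have := negHalfPos_nonneg (s - x); have := negHalfPos_nonneg (s + x); positivity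
  have hg_integral : ∫ x in p..q, g x ≤ 4 * √(q - p) / √s := by
    simp only [g, intervalIntegral.integral_const_mul]
    rw [intervalIntegral.integral_add h₁ h₂, intervalIntegral.integral_comp_sub_left,
      intervalIntegral.integral_comp_add_left, inv_mul_eq_div]
    gcongr
    have hl := integral_negHalfPos_le (s - q) (s - p)
    have hr := integral_negHalfPos_le (s + p) (s + q)
    rw [show s - p - (s - q) = q - p by ring] at hl
    rw [show s + q - (s + p) = q - p by ring] at hr
    linarith
  calc ∫⁻ x in Icc p q, ENNReal.ofReal (negHalfPos (s ^ 2 - x ^ 2))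
      ≤ ∫⁻ x in Icc p q, ENNReal.ofReal (g x) :=
        lintegral_mono fun x => ENNReal.ofReal_le_ofReal (negHalfPos_sq_sub_sq_le hs x)
    _ = ENNReal.ofReal (∫ x in p..q, g x) := by
        rw [intervalIntegral.integral_of_le hpq, ← integral_Icc_eq_integral_Ioc,
          ofReal_integral_eq_lintegral_ofReal
            ((intervalIntegrable_iff_integrableOn_Icc_of_le hpq).1 ((h₁.add h₂).const_mul _))
            (Filter.Eventually.of_forall hg_nonneg)]
    _ ≤ _ := ENNReal.ofReal_le_ofReal hg_integral

theorem lintegral_negHalfPos_sub_sq_of_nonpos {u : ℝ} (hu : u ≤ 0) :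
    ∫⁻ x, ENNReal.ofReal (negHalfPos (u - x ^ 2)) = 0 :=
  (lintegral_congr fun x => by
    rw [negHalfPos_of_nonpos (by nlinarith [sq_nonneg x]), ENNReal.ofReal_zero]).trans
    lintegral_zero

theorem lintegral_negHalfPos_sub_sq_le (u : ℝ) :
    ∫⁻ x, ENNReal.ofReal (negHalfPos (u - x ^ 2)) ≤ ENNReal.ofReal 6 := by
  rcases le_or_gt u 0 with hu | hu
  · rw [lintegral_negHalfPos_sub_sq_of_nonpos hu]
    exact zero_le
  obtain ⟨s, hs, rfl⟩ : ∃ s, 0 < s ∧ u = s ^ 2 := ⟨√u, sqrt_pos.2 hu, (sq_sqrt hu.le).symm⟩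
  have hsupp : Function.support (fun x => ENNReal.ofReal (negHalfPos (s ^ 2 - x ^ 2))) ⊆
      Icc (-s) s := by
    intro x hx
    have : 0 < s ^ 2 - x ^ 2 := by
      by_contra h
      exact hx (by simp [negHalfPos_of_nonpos (not_lt.1 h)])
    exact abs_le_of_sq_le_sq' (by linarith) hs.le
  rw [← setLIntegral_eq_of_support_subset hsupp]
  refine (setLIntegral_Icc_negHalfPos_sq_sub_sq_le hs (by linarith)).trans
    (ENNReal.ofReal_le_ofReal ?_)
  rw [show s - -s = 2 * s by ring, sqrt_mul zero_le_two, ← mul_assoc, mul_div_assoc,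
    div_self (sqrt_pos.2 hs).ne', mul_one]
  nlinarith [sq_sqrt (zero_le_two : (0:ℝ) ≤ 2), sqrt_nonneg 2]

theorem lintegral_negHalfPos_sq_sub_sq_sub_sq_le {t : ℝ} (ht : 0 ≤ t) :
    ∫⁻ y : ℝ × ℝ, ENNReal.ofReal (negHalfPos (t ^ 2 - y.1 ^ 2 - y.2 ^ 2)) ≤
      ENNReal.ofReal (12 * t) := by
  rw [Measure.volume_eq_prod, lintegral_prod _ (by fun_prop)]
  calc ∫⁻ x, ∫⁻ y, ENNReal.ofReal (negHalfPos (t ^ 2 - x ^ 2 - y ^ 2))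
      ≤ ∫⁻ x, (Ioo (-t) t).indicator (fun _ => ENNReal.ofReal 6) x := by
        refine lintegral_mono fun x => ?_
        by_cases hx : x ∈ Ioo (-t) t
        · rw [indicator_of_mem hx]
          exact lintegral_negHalfPos_sub_sq_le _
        · have : t ^ 2 ≤ x ^ 2 := by
            rw [mem_Ioo, not_and_or, not_lt, not_lt] at hx
            rcases hx with hx | hx <;> nlinarith
          rw [lintegral_negHalfPos_sub_sq_of_nonpos (by linarith)]
          exact zero_le
    _ = ENNReal.ofReal (12 * t) := by
        rw [lintegral_indicator_const measurableSet_Ioo, Real.volume_Ioo,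
          ← ENNReal.ofReal_mul (by norm_num)]
        ring_nf

theorem setLIntegral_Icc_negHalfPos_le_of_abs_le {t δ a b y : ℝ} (hδ : 0 < δ) (ht : 4 * δ ≤ t)
    (hab : |b| ≤ |a|) (hy : y ∈ Icc (b - δ) (b + δ)) :
    ∫⁻ x in Icc (a - δ) (a + δ), ENNReal.ofReal (negHalfPos (t ^ 2 - y ^ 2 - x ^ 2)) ≤
      ENNReal.ofReal (8 * √(2 * δ) / √t) := by
  by_cases hpos : ∃ x ∈ Icc (a - δ) (a + δ), x ^ 2 < t ^ 2 - y ^ 2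
  swap
  · push Not at hpos
    refine (setLIntegral_mono (g := fun _ => 0) measurable_const fun x hx => ?_).trans (by simp)
    rw [negHalfPos_of_nonpos (by linarith [hpos x hx]), ENNReal.ofReal_zero]
  obtain ⟨x₀, hx₀, hx₀y⟩ := hpos
  obtain ⟨s, hs, hsy⟩ : ∃ s, 0 < s ∧ t ^ 2 - y ^ 2 = s ^ 2 :=
    ⟨√(t ^ 2 - y ^ 2), sqrt_pos.2 (by nlinarith), (sq_sqrt (by nlinarith)).symm⟩
  -- As `|b| ≤ |a|`, a fibre meeting the disc `x² + y² < t²` crosses its boundary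
  -- transversally: its half-length `s` is comparable to `t`.
  have hts : t ≤ 4 * s := by
    have hx₀s : |x₀| < s := abs_lt_of_sq_lt_sq (by linarith) hs.le
    rw [mem_Icc] at hx₀ hy
    have hax₀ : |a| ≤ |x₀| + δ := by
      have : |a - x₀| ≤ δ := abs_sub_le_iff.2 ⟨by linarith, by linarith⟩
      linarith [abs_sub_abs_le_abs_sub a x₀]
    have hyb : |y| ≤ |b| + δ := by
      have : |y - b| ≤ δ := abs_sub_le_iff.2 ⟨by linarith, by linarith⟩
      linarith [abs_sub_abs_le_abs_sub y b]
    nlinarith [sq_abs y, abs_nonneg y]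
  rw [hsy]
  refine (setLIntegral_Icc_negHalfPos_sq_sub_sq_le hs (by linarith)).trans
    (ENNReal.ofReal_le_ofReal ?_)
  rw [show a + δ - (a - δ) = 2 * δ by ring,
    div_le_div_iff₀ (sqrt_pos.2 hs) (sqrt_pos.2 (by linarith))]
  have : √t ≤ 2 * √s := sqrt_le_iff.2 ⟨by positivity, by nlinarith [sq_sqrt hs.le]⟩
  nlinarith [sqrt_nonneg (2 * δ)]

theorem setLIntegral_closedBall_negHalfPos_le {t δ : ℝ} (c : ℝ × ℝ) (hδ : 0 < δ)
    (ht : 4 * δ ≤ t) :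
    ∫⁻ y in closedBall c δ, ENNReal.ofReal (negHalfPos (t ^ 2 - y.1 ^ 2 - y.2 ^ 2)) ≤
      ENNReal.ofReal (16 * δ * √(2 * δ) / √t) := by
  have hmeas : Measurable fun y : ℝ × ℝ =>
      ENNReal.ofReal (negHalfPos (t ^ 2 - y.1 ^ 2 - y.2 ^ 2)) := by
    fun_prop
  have houter : ∀ b : ℝ, ∫⁻ _ in Icc (b - δ) (b + δ), ENNReal.ofReal (8 * √(2 * δ) / √t) =
      ENNReal.ofReal (16 * δ * √(2 * δ) / √t) := fun b => by
    rw [setLIntegral_const, Real.volume_Icc, ← ENNReal.ofReal_mul (by positivity)]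
    ring_nf
  rw [← closedBall_prod_same, Real.closedBall_eq_Icc, Real.closedBall_eq_Icc,
    Measure.volume_eq_prod, ← Measure.prod_restrict]
  rcases le_total |c.2| |c.1| with h | h
  · rw [lintegral_prod_symm _ hmeas.aemeasurable, ← houter c.2]
    refine setLIntegral_mono measurable_const fun y hy => ?_
    simp only [sub_right_comm _ _ (y ^ 2)]
    exact setLIntegral_Icc_negHalfPos_le_of_abs_le hδ ht h hy
  · rw [lintegral_prod _ hmeas.aemeasurable, ← houter c.1]
    exact setLIntegral_mono measurable_const fun x hx =>
      setLIntegral_Icc_negHalfPos_le_of_abs_le hδ ht h hx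

theorem mem_closedBall_of_mem_polarRect {ε r₀ θ₀ r θ : ℝ} (hr₀ : 0 < r₀)
    (hr : r ∈ Ioc r₀ (r₀ + ε)) (hθ : |θ - θ₀| ≤ ε / r₀) :
    (r * cos θ, r * sin θ) ∈ closedBall (r₀ * cos θ₀, r₀ * sin θ₀) (2 * ε) := by
  obtain ⟨hr₁, hr₂⟩ := hr
  have hθ' : r₀ * |θ - θ₀| ≤ ε := by rwa [le_div_iff₀' hr₀] at hθ
  have key : ∀ u u₀ : ℝ, |u| ≤ 1 → |u - u₀| ≤ |θ - θ₀| → |r * u - r₀ * u₀| ≤ 2 * ε := by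
    intro u u₀ hu huu₀
    calc |r * u - r₀ * u₀| = |(r - r₀) * u + r₀ * (u - u₀)| := by ring_nf
      _ ≤ (r - r₀) * 1 + r₀ * |θ - θ₀| := by
        refine (abs_add_le _ _).trans (add_le_add ?_ ?_) <;> rw [abs_mul]
        · rw [abs_of_pos (sub_pos.2 hr₁)]; gcongr
        · rw [abs_of_pos hr₀]; gcongr
      _ ≤ 2 * ε := by linarith
  rw [mem_closedBall, Prod.dist_eq, max_le_iff, Real.dist_eq, Real.dist_eq]
  exact ⟨key _ _ (abs_cos_le_one θ) (abs_cos_sub_cos_le θ θ₀),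
    key _ _ (abs_sin_le_one θ) (abs_sin_sub_sin_le θ θ₀)⟩

theorem lintegral_polarRect_le {f : ℝ × ℝ → ℝ≥0∞} (hf : Measurable f) {ε r₀ : ℝ}
    (hr₀ : 0 < r₀) (θ₀ : ℝ) :
    ∫⁻ r in Ioc r₀ (r₀ + ε), (∫⁻ θ in {θ : ℝ | |θ - θ₀| ≤ ε / r₀ ∧ |θ| ≤ π},
        f (r * cos θ, r * sin θ)) * ENNReal.ofReal r ≤
      ∫⁻ x in closedBall (r₀ * cos θ₀, r₀ * sin θ₀) (2 * ε), f x := by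
  set B := closedBall (r₀ * cos θ₀, r₀ * sin θ₀) (2 * ε)
  set S := {θ : ℝ | |θ - θ₀| ≤ ε / r₀ ∧ |θ| ≤ π}
  have hS : MeasurableSet S := by
    simp only [S, ofPred_and]
    exact (measurableSet_le (by fun_prop) measurable_const).inter
      (measurableSet_le (by fun_prop) measurable_const)
  have hSπ : S ≤ᵐ[volume] Ioo (-π) π :=
    (show S ⊆ Icc (-π) π from fun θ hθ => abs_le.1 hθ.2).eventuallyLE.trans
      Ioo_ae_eq_Icc.symm.le
  have hmeas : Measurable fun p : ℝ × ℝ => ENNReal.ofReal p.1 • B.indicator f (polarCoord.symm p) :=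
    (ENNReal.measurable_ofReal.comp measurable_fst).smul
      ((hf.indicator measurableSet_closedBall).comp continuous_polarCoord_symm.measurable)
  rw [← lintegral_indicator measurableSet_closedBall, ← lintegral_comp_polarCoord_symm,
    polarCoord_target, Measure.volume_eq_prod, ← Measure.prod_restrict,
    lintegral_prod _ hmeas.aemeasurable]
  calc _ = ∫⁻ r in Ioc r₀ (r₀ + ε), ∫⁻ θ in S,
        ENNReal.ofReal r • B.indicator f (polarCoord.symm (r, θ)) := by
        refine setLIntegral_congr_fun measurableSet_Ioc fun r hr => ?_
        rw [← lintegral_mul_const' _ _ ENNReal.ofReal_ne_top]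
        refine setLIntegral_congr_fun hS fun θ hθ => ?_
        rw [polarCoord_symm_apply, indicator_of_mem (mem_closedBall_of_mem_polarRect hr₀ hr hθ.1),
          smul_eq_mul, mul_comm]
    _ ≤ ∫⁻ r in Ioc r₀ (r₀ + ε), ∫⁻ θ in Ioo (-π) π,
        ENNReal.ofReal r • B.indicator f (polarCoord.symm (r, θ)) :=
        lintegral_mono fun r => lintegral_mono_set' hSπ
    _ ≤ _ := lintegral_mono_set fun r hr => lt_trans hr₀ hr.1

theorem setLIntegral_closedBall_comp_sub_right {E : Type*} [NormedAddCommGroup E]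
    [MeasurableSpace E] [OpensMeasurableSpace E] [MeasurableAdd E] {μ : Measure E}
    [μ.IsAddRightInvariant]
    (f : E → ℝ≥0∞) (c v : E) (δ : ℝ) :
    ∫⁻ x in closedBall c δ, f (x - v) ∂μ = ∫⁻ y in closedBall (c - v) δ, f y ∂μ := by
  rw [← lintegral_indicator measurableSet_closedBall,
    ← lintegral_indicator measurableSet_closedBall,
    ← lintegral_sub_right_eq_self ((closedBall (c - v) δ).indicator f) v]
  refine lintegral_congr fun x => ?_
  simp only [indicator, mem_closedBall, dist_sub_right]

theorem setLIntegral_closedBall_negHalfPos_le_min {ε t : ℝ} (c : ℝ × ℝ) (hε : 0 < ε)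
    (hε₀ : ε ≤ 1 / 8) (ht : 0 < t) :
    ∫⁻ y in closedBall c (2 * ε), ENNReal.ofReal (negHalfPos (t ^ 2 - y.1 ^ 2 - y.2 ^ 2)) ≤
      ENNReal.ofReal (12 * min t (t ^ (-(1/2) : ℝ))) := by
  rcases le_total t 1 with ht1 | ht1
  · rw [min_eq_left (ht1.trans (one_le_rpow_of_pos_of_le_one_of_nonpos ht ht1 (by norm_num)))]
    exact (setLIntegral_le_lintegral _ _).trans (lintegral_negHalfPos_sq_sub_sq_sub_sq_le ht.le)
  · rw [min_eq_right ((rpow_le_one_of_one_le_of_nonpos ht1 (by norm_num)).trans ht1),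
      rpow_neg ht.le, ← sqrt_eq_rpow, ← div_eq_mul_inv]
    refine (setLIntegral_closedBall_negHalfPos_le _ (by positivity) (by linarith)).trans
      (ENNReal.ofReal_le_ofReal ?_)
    have : √(2 * (2 * ε)) ≤ 1 := sqrt_le_one.2 (by linarith)
    gcongr
    nlinarith [sqrt_nonneg (2 * (2 * ε))]

theorem ofReal_integral_mul_le_lintegral {I S : Set ℝ} (hI : MeasurableSet I)
    (hI₀ : ∀ r ∈ I, 0 ≤ r) {F : ℝ → ℝ → ℝ} (hF : ∀ r θ, 0 ≤ F r θ) :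
    ENNReal.ofReal (∫ r in I, (∫ θ in S, F r θ) * r) ≤
      ∫⁻ r in I, (∫⁻ θ in S, ENNReal.ofReal (F r θ)) * ENNReal.ofReal r := by
  refine (ofReal_le_enorm _).trans ((enorm_integral_le_lintegral_enorm _).trans ?_)
  refine setLIntegral_mono' hI fun r hr => ?_
  rw [enorm_mul, Real.enorm_eq_ofReal (hI₀ r hr)]
  gcongr
  exact (enorm_integral_le_lintegral_enorm _).trans_eq
    (lintegral_congr fun θ => Real.enorm_eq_ofReal (hF r θ))

/-- Lemma 3.2: integral bound over polar rectangles for the geometric kernel. -/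
theorem stmt_0 :
    ∃ ε₀ > (0:ℝ), ∃ C > (0:ℝ), ∀ ε : ℝ, 0 < ε → ε ≤ ε₀ →
      ∀ r₀ : ℝ, 0 < r₀ → ∀ θ₀ : ℝ,
      ((∀ θ : ℝ, |θ - θ₀| ≤ ε / r₀ → |θ| ≤ π → 0 ≤ θ) ∨
       (∀ θ : ℝ, |θ - θ₀| ≤ ε / r₀ → |θ| ≤ π → θ ≤ 0)) →
      ∀ r₁ : ℝ, 0 < r₁ → ∀ t : ℝ, 0 < t →
      (∫ r in Set.Ioc r₀ (r₀ + ε),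
        (∫ θ in {θ : ℝ | |θ - θ₀| ≤ ε / r₀ ∧ |θ| ≤ π},
          negHalfPos (t^2 - r₁^2 - r^2 + 2 * r₁ * r * Real.cos θ)) * r)
        ≤ C * min t (t ^ (-(1/2) : ℝ)) := by
  refine ⟨1 / 8, by norm_num, 12, by norm_num, fun ε hε hε₀ r₀ hr₀ θ₀ _ r₁ _ t ht => ?_⟩
  set g : ℝ × ℝ → ℝ≥0∞ := fun y => ENNReal.ofReal (negHalfPos (t ^ 2 - y.1 ^ 2 - y.2 ^ 2))
  have hcart : ∀ r θ, t ^ 2 - r₁ ^ 2 - r ^ 2 + 2 * r₁ * r * cos θ =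
      t ^ 2 - ((r * cos θ, r * sin θ) - (r₁, 0) : ℝ × ℝ).1 ^ 2 -
        ((r * cos θ, r * sin θ) - (r₁, 0) : ℝ × ℝ).2 ^ 2 := fun r θ => by
    simp only [Prod.fst_sub, Prod.snd_sub, sub_zero]
    linear_combination r ^ 2 * sin_sq_add_cos_sq θ
  rw [← ENNReal.ofReal_le_ofReal_iff (by positivity)]
  calc _ ≤ ∫⁻ r in Ioc r₀ (r₀ + ε), (∫⁻ θ in {θ : ℝ | |θ - θ₀| ≤ ε / r₀ ∧ |θ| ≤ π},
          g ((r * cos θ, r * sin θ) - (r₁, 0))) * ENNReal.ofReal r := by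
        simpa only [hcart] using ofReal_integral_mul_le_lintegral measurableSet_Ioc
          (fun r hr => (hr₀.trans hr.1).le) fun r θ => negHalfPos_nonneg _
    _ ≤ ∫⁻ x in closedBall (r₀ * cos θ₀, r₀ * sin θ₀) (2 * ε), g (x - (r₁, 0)) :=
        lintegral_polarRect_le (f := fun x => g (x - (r₁, 0))) (by fun_prop) hr₀ θ₀
    _ = ∫⁻ y in closedBall ((r₀ * cos θ₀, r₀ * sin θ₀) - (r₁, 0)) (2 * ε), g y :=
        setLIntegral_closedBall_comp_sub_right g _ _ _
    _ ≤ _ := setLIntegral_closedBall_negHalfPos_le_min _ hε hε₀ ht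
end

section
/- For every ρ > 0 there exists a constant C > 0 (depending only on ρ) with the following property: for all r₁, r₂ > 0, all t > r₁ + r₂, and all θ ∈ ℝ, set α = (t² − r₁² − r₂²)/(2 r₁ r₂), let β ≥ 0 be the unique nonnegative real with cosh β = α, and set φ₁ = (π + θ)/ρ and φ₂ = (π − θ)/ρ. Then | (4π²ρ)^{−1} (2 r₁ r₂)^{−1/2} ∫₀^β (α − cosh s)^{−1/2} [ sin φ₁ / (cosh(s/ρ) − cos φ₁) + sin φ₂ / (cosh(s/ρ) − cos φ₂) ] ds | ≤ C (t² − (r₁ + r₂)²)^{−1/2}. -/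
/-!
With `cosh β = α`, the weight satisfies
`cosh β - cosh s ≥ (e^β - 1)/2 · (1 - e^{-(β - s)})`, whence
`(cosh β - cosh s)^{-1/2} ≤ ((e^β - 1)/2)^{-1/2} (1 + (β - s)^{-1/2})`.
By the half-angle identity `cosh 2x - cos 2ψ = 2 (sinh² x + sin² ψ)`, each trigonometric quotient
is dominated by the Lorentzian `|sin ψ| / (sin² ψ + x²)` in `x = s/2ρ`, whose integral is at most
`πρ` uniformly in `ψ` and whose value is at most `ρ/s`. The singularity `(β - s)^{-1/2}` is handled
by splitting at `β/2`: before, it is at most `√(2/β)`; after, the Lorentzians are at most `2ρ/β`.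
Finally `t² - (r₁ + r₂)² = 2 r₁ r₂ (cosh β - 1)` and
`cosh β - 1 = (e^β - 1)/2 · (1 - e^{-β})` with `1 - e^{-β} ≤ min 1 β`.
-/

open MeasureTheory Real Set

lemma rpow_neg_one_half_eq_inv_sqrt (x : ℝ) : x ^ (-(1/2) : ℝ) = (√x)⁻¹ := by
  rcases le_or_gt 0 x with hx | hx
  · rw [sqrt_eq_rpow, ← rpow_neg hx]
  · rw [rpow_def_of_neg hx, sqrt_eq_zero'.mpr hx.le, inv_zero,
      show (-(1/2) : ℝ) * π = -(π / 2) by ring, cos_neg, cos_pi_div_two, mul_zero]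

lemma cosh_two_mul_sub_cos_two_mul (x ψ : ℝ) :
    cosh (2 * x) - cos (2 * ψ) = 2 * (sinh x ^ 2 + sin ψ ^ 2) := by
  rw [cosh_two_mul, cos_two_mul, cosh_sq, cos_sq']
  ring

lemma sq_le_sinh_sq (x : ℝ) : x ^ 2 ≤ sinh x ^ 2 :=
  sq_le_sq.mpr (by rw [abs_sinh]; exact self_le_sinh_iff.mpr (abs_nonneg x))

lemma abs_sin_two_mul_div_cosh_two_mul_sub_cos_le (x ψ : ℝ) :
    |sin (2 * ψ) / (cosh (2 * x) - cos (2 * ψ))| ≤ |sin ψ| / (sin ψ ^ 2 + x ^ 2) := by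
  rw [cosh_two_mul_sub_cos_two_mul, abs_div, sin_two_mul, abs_mul, abs_mul, abs_two]
  rcases (add_nonneg (sq_nonneg (sin ψ)) (sq_nonneg x)).eq_or_lt with h | h
  · have : sin ψ = 0 := by nlinarith [sq_nonneg x, sq_nonneg (sin ψ)]
    simp [this]
  have hden : 2 * (sin ψ ^ 2 + x ^ 2) ≤ |2 * (sinh x ^ 2 + sin ψ ^ 2)| := by
    rw [abs_of_nonneg (by positivity)]; linarith [sq_le_sinh_sq x]
  calc 2 * |sin ψ| * |cos ψ| / |2 * (sinh x ^ 2 + sin ψ ^ 2)|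
      ≤ 2 * |sin ψ| / (2 * (sin ψ ^ 2 + x ^ 2)) :=
        div_le_div₀ (by positivity)
          (mul_le_of_le_one_right (by positivity) (abs_cos_le_one ψ)) (by positivity) hden
    _ = |sin ψ| / (sin ψ ^ 2 + x ^ 2) := mul_div_mul_left _ _ two_ne_zero

lemma abs_sin_div_cosh_sub_cos_le (ρ φ s : ℝ) :
    |sin φ / (cosh (s / ρ) - cos φ)| ≤ |sin (φ / 2)| / (sin (φ / 2) ^ 2 + (s / (2 * ρ)) ^ 2) := by
  have h := abs_sin_two_mul_div_cosh_two_mul_sub_cos_le (s / (2 * ρ)) (φ / 2)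
  rwa [mul_div_cancel₀ φ two_ne_zero, show 2 * (s / (2 * ρ)) = s / ρ by ring] at h

lemma continuous_abs_div_sq_add_sq (a c : ℝ) :
    Continuous fun s : ℝ => |a| / (a ^ 2 + (s / c) ^ 2) := by
  rcases eq_or_ne a 0 with rfl | ha
  · simp only [abs_zero, zero_div]; exact continuous_const
  · exact continuous_const.div (by fun_prop) fun s => by positivity

lemma abs_div_sq_add_sq_le {a c s : ℝ} (hc : 0 < c) (hs : 0 < s) :
    |a| / (a ^ 2 + (s / c) ^ 2) ≤ c / 2 / s := by
  have hsc : 0 < s / c := div_pos hs hc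
  calc |a| / (a ^ 2 + (s / c) ^ 2) ≤ 1 / (2 * (s / c)) := by
        rw [div_le_div_iff₀ (by positivity) (by positivity), ← sq_abs a]
        nlinarith [sq_nonneg (|a| - s / c)]
    _ = c / 2 / s := by field_simp

lemma integral_abs_div_sq_add_sq_le (a β : ℝ) {c : ℝ} (hc : 0 < c) :
    ∫ s in (0 : ℝ)..β, |a| / (a ^ 2 + (s / c) ^ 2) ≤ π * c / 2 := by
  rcases eq_or_ne a 0 with rfl | ha
  · simp only [abs_zero, zero_div, intervalIntegral.integral_zero]; positivity
  have hca : 0 < c * |a| := by positivity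
  have hderiv : ∀ s, HasDerivAt (fun s => c * arctan (s / (c * |a|)))
      (|a| / (a ^ 2 + (s / c) ^ 2)) s := fun s => by
    refine ((((hasDerivAt_id s).div_const (c * |a|)).arctan).const_mul c).congr_deriv ?_
    field_simp
    rw [sq_abs, id]
  rw [intervalIntegral.integral_eq_sub_of_hasDerivAt (fun s _ => hderiv s)
    ((continuous_abs_div_sq_add_sq a c).intervalIntegrable _ _)]
  simp only [zero_div, arctan_zero, mul_zero, sub_zero]
  nlinarith [arctan_lt_pi_div_two (β / (c * |a|))]

lemma intervalIntegrable_inv_sqrt_sub (β : ℝ) :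
    IntervalIntegrable (fun s => (√(β - s))⁻¹) volume 0 β := by
  simp_rw [← rpow_neg_one_half_eq_inv_sqrt]
  simpa using ((intervalIntegral.intervalIntegrable_rpow' (r := -(1/2)) (a := 0) (b := β)
    (by norm_num)).comp_sub_left β).symm

lemma integral_inv_sqrt_sub (β : ℝ) :
    ∫ s in (0 : ℝ)..β, (√(β - s))⁻¹ = 2 * √β := by
  simp_rw [← rpow_neg_one_half_eq_inv_sqrt]
  rw [intervalIntegral.integral_comp_sub_left (fun x => x ^ (-(1/2) : ℝ)) β, sub_self, sub_zero,
    integral_rpow (Or.inl (by norm_num)), zero_rpow (by norm_num), sqrt_eq_rpow]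
  norm_num
  ring

lemma integral_inv_sqrt_sub_mul_le {β A B : ℝ} {g : ℝ → ℝ} (hβ : 0 < β)
    (hg : ContinuousOn g (Icc 0 β)) (hg0 : ∀ s ∈ Icc 0 β, 0 ≤ g s)
    (hgB : ∀ s ∈ Ioc 0 β, g s ≤ B / s) (hgA : ∫ s in (0 : ℝ)..β, g s ≤ A) :
    ∫ s in (0 : ℝ)..β, (√(β - s))⁻¹ * g s ≤ (√2 * A + 4 * B) / √β := by
  have hB : 0 ≤ B := by
    simpa using (le_div_iff₀ hβ).mp ((hg0 β ⟨hβ.le, le_rfl⟩).trans (hgB β ⟨hβ, le_rfl⟩))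
  have hg' : ContinuousOn g (uIcc 0 β) := by rwa [uIcc_of_le hβ.le]
  have hgi : IntervalIntegrable g volume 0 β := hg'.intervalIntegrable
  have hFi := intervalIntegrable_inv_sqrt_sub β
  have hsqrtβ : 0 < √β := sqrt_pos.mpr hβ
  have hsplit : ∀ s ∈ Icc 0 β,
      (√(β - s))⁻¹ * g s ≤ √2 / √β * g s + 2 * B / β * (√(β - s))⁻¹ := by
    rintro s ⟨hs0, hsβ⟩
    have hgs := hg0 s ⟨hs0, hsβ⟩
    rcases le_or_gt s (β / 2) with hs | hs
    · have hF : (√(β - s))⁻¹ ≤ √2 / √β := by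
        rw [← inv_div, ← sqrt_div' _ zero_le_two]
        exact inv_anti₀ (by positivity) (sqrt_le_sqrt (by linarith))
      nlinarith [mul_le_mul_of_nonneg_right hF hgs, inv_nonneg.mpr (sqrt_nonneg (β - s)),
        div_nonneg (mul_nonneg zero_le_two hB) hβ.le]
    · have hg : g s ≤ 2 * B / β := (hgB s ⟨by linarith, hsβ⟩).trans <| by
        rw [div_le_div_iff₀ (by linarith) hβ]; nlinarith
      nlinarith [mul_le_mul_of_nonneg_left hg (inv_nonneg.mpr (sqrt_nonneg (β - s))),
        mul_nonneg (div_nonneg (sqrt_nonneg 2) hsqrtβ.le) hgs]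
  calc ∫ s in (0 : ℝ)..β, (√(β - s))⁻¹ * g s
      ≤ ∫ s in (0 : ℝ)..β, (√2 / √β * g s + 2 * B / β * (√(β - s))⁻¹) :=
        intervalIntegral.integral_mono_on hβ.le (hFi.mul_continuousOn hg')
          ((hgi.const_mul _).add (hFi.const_mul _)) hsplit
    _ = √2 / √β * (∫ s in (0 : ℝ)..β, g s) + 2 * B / β * (2 * √β) := by
        rw [intervalIntegral.integral_add (hgi.const_mul _) (hFi.const_mul _),
          intervalIntegral.integral_const_mul, intervalIntegral.integral_const_mul,
          integral_inv_sqrt_sub]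
    _ ≤ √2 / √β * A + 2 * B / β * (2 * √β) := by gcongr
    _ = (√2 * A + 4 * B) / √β := by
        field_simp
        rw [sq_sqrt hβ.le]
        ring

lemma cosh_sub_cosh_ge {s β : ℝ} (hs : 0 ≤ s) (hsβ : s ≤ β) :
    (exp β - 1) / 2 * (1 - exp (-(β - s))) ≤ cosh β - cosh s := by
  have hx : 1 ≤ exp s := one_le_exp hs
  have hxy : exp s ≤ exp β := exp_le_exp.mpr hsβ
  have hdiff : cosh β - cosh s - (exp β - 1) / 2 * (1 - exp (-(β - s)))
      = (exp β - exp s) * (exp s - 1) / (2 * exp s * exp β) := by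
    rw [cosh_eq, cosh_eq, neg_sub, exp_sub, exp_neg, exp_neg]
    field_simp
    ring
  have : 0 ≤ (exp β - exp s) * (exp s - 1) / (2 * exp s * exp β) := by
    apply div_nonneg (mul_nonneg (by linarith) (by linarith)) (by positivity)
  linarith

lemma cosh_sub_one_eq (β : ℝ) : cosh β - 1 = (exp β - 1) / 2 * (1 - exp (-β)) := by
  rw [cosh_eq, exp_neg]
  field_simp
  ring

lemma inv_sqrt_one_sub_exp_neg_le (u : ℝ) : (√(1 - exp (-u)))⁻¹ ≤ 1 + (√u)⁻¹ := by
  rcases le_or_gt u 0 with hu | hu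
  · rw [sqrt_eq_zero'.mpr (by linarith [one_le_exp (neg_nonneg.mpr hu)]), inv_zero]
    positivity
  have hexp : exp (-u) ≤ 1 - u / (1 + u) := by
    rw [exp_neg, one_sub_div (by positivity : (1 + u) ≠ 0), add_sub_cancel_right, one_div]
    exact inv_anti₀ (by positivity) (by linarith [add_one_le_exp u])
  have hinv : (1 - exp (-u))⁻¹ ≤ 1 + u⁻¹ :=
    calc (1 - exp (-u))⁻¹ ≤ (u / (1 + u))⁻¹ := inv_anti₀ (by positivity) (by linarith)
      _ = 1 + u⁻¹ := by field_simp; ring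
  have hsq : (√u)⁻¹ ^ 2 = u⁻¹ := by rw [inv_pow, sq_sqrt hu.le]
  rw [← sqrt_inv, sqrt_le_left (by positivity)]
  nlinarith [inv_nonneg.mpr (sqrt_nonneg u)]

lemma inv_sqrt_cosh_sub_cosh_le {s β : ℝ} (hs : 0 ≤ s) (hsβ : s ≤ β) :
    (√(cosh β - cosh s))⁻¹ ≤ (√((exp β - 1) / 2))⁻¹ * (1 + (√(β - s))⁻¹) := by
  rcases hsβ.eq_or_lt with rfl | hsβ
  · rw [sub_self, sqrt_zero, inv_zero]; positivity
  have hD : 0 < (exp β - 1) / 2 := by linarith [add_one_le_exp β]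
  have he : 0 < 1 - exp (-(β - s)) := by
    rw [sub_pos, exp_lt_one_iff, neg_lt_zero, sub_pos]; exact hsβ
  calc (√(cosh β - cosh s))⁻¹ ≤ (√((exp β - 1) / 2 * (1 - exp (-(β - s)))))⁻¹ :=
        inv_anti₀ (by positivity) (sqrt_le_sqrt (cosh_sub_cosh_ge hs hsβ.le))
    _ = (√((exp β - 1) / 2))⁻¹ * (√(1 - exp (-(β - s))))⁻¹ := by rw [sqrt_mul hD.le, mul_inv]
    _ ≤ (√((exp β - 1) / 2))⁻¹ * (1 + (√(β - s))⁻¹) := by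
        gcongr; exact inv_sqrt_one_sub_exp_neg_le _

lemma inv_sqrt_exp_sub_one_div_two_mul_le {β A X : ℝ} (hβ : 0 < β) (hA : 0 ≤ A) (hX : 0 ≤ X) :
    (√((exp β - 1) / 2))⁻¹ * (A + X / √β) ≤ (A + X) / √(cosh β - 1) := by
  set D := (exp β - 1) / 2
  set e := 1 - exp (-β)
  have hD : 0 < D := by simp only [D]; linarith [add_one_le_exp β]
  have he : 0 < e := by rw [sub_pos, exp_lt_one_iff, neg_lt_zero]; exact hβ
  have heβ : √e ≤ √β := sqrt_le_sqrt (by linarith [add_one_le_exp (-β)])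
  have he1 : √e ≤ 1 := sqrt_le_one.mpr (by linarith [exp_pos (-β)])
  calc (√D)⁻¹ * (A + X / √β) = (√D)⁻¹ * (√e)⁻¹ * (√e * A + √e / √β * X) := by
        field_simp
    _ ≤ (√D)⁻¹ * (√e)⁻¹ * (A + X) := by
        gcongr
        · exact mul_le_of_le_one_left hA he1
        · exact mul_le_of_le_one_left hX ((div_le_one (sqrt_pos.mpr hβ)).mpr heβ)
    _ = (A + X) / √(cosh β - 1) := by
        rw [show cosh β - 1 = D * e from cosh_sub_one_eq β, sqrt_mul hD.le]
        field_simp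

lemma abs_integral_inv_sqrt_cosh_sub_cosh_mul_le {β A B : ℝ} {G g : ℝ → ℝ} (hβ : 0 < β)
    (hg : ContinuousOn g (Icc 0 β)) (hg0 : ∀ s ∈ Icc 0 β, 0 ≤ g s)
    (hgB : ∀ s ∈ Ioc 0 β, g s ≤ B / s) (hgA : ∫ s in (0 : ℝ)..β, g s ≤ A)
    (hG : ∀ s ∈ Ioc 0 β, |G s| ≤ g s) :
    |∫ s in (0 : ℝ)..β, (√(cosh β - cosh s))⁻¹ * G s|
      ≤ ((1 + √2) * A + 4 * B) / √(cosh β - 1) := by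
  set D := (exp β - 1) / 2
  have hg' : ContinuousOn g (uIcc 0 β) := by rwa [uIcc_of_le hβ.le]
  have hgi : IntervalIntegrable g volume 0 β := hg'.intervalIntegrable
  have hFgi := (intervalIntegrable_inv_sqrt_sub β).mul_continuousOn hg'
  have hA : 0 ≤ A := (intervalIntegral.integral_nonneg hβ.le hg0).trans hgA
  have hB : 0 ≤ B := by
    simpa using (le_div_iff₀ hβ).mp ((hg0 β ⟨hβ.le, le_rfl⟩).trans (hgB β ⟨hβ, le_rfl⟩))
  have hpointwise : ∀ s ∈ Ioc 0 β, ‖(√(cosh β - cosh s))⁻¹ * G s‖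
      ≤ (√D)⁻¹ * (g s + (√(β - s))⁻¹ * g s) := by
    rintro s ⟨hs0, hsβ⟩
    rw [norm_mul, norm_inv, norm_of_nonneg (sqrt_nonneg _), Real.norm_eq_abs]
    calc (√(cosh β - cosh s))⁻¹ * |G s| ≤ (√D)⁻¹ * (1 + (√(β - s))⁻¹) * g s :=
          mul_le_mul (inv_sqrt_cosh_sub_cosh_le hs0.le hsβ) (hG s ⟨hs0, hsβ⟩) (abs_nonneg _)
            (by positivity)
      _ = (√D)⁻¹ * (g s + (√(β - s))⁻¹ * g s) := by ring
  calc |∫ s in (0 : ℝ)..β, (√(cosh β - cosh s))⁻¹ * G s|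
      ≤ ∫ s in (0 : ℝ)..β, (√D)⁻¹ * (g s + (√(β - s))⁻¹ * g s) :=
        intervalIntegral.norm_integral_le_of_norm_le hβ.le (ae_of_all _ hpointwise)
          ((hgi.add hFgi).const_mul _)
    _ = (√D)⁻¹ * ((∫ s in (0 : ℝ)..β, g s) + ∫ s in (0 : ℝ)..β, (√(β - s))⁻¹ * g s) := by
        rw [intervalIntegral.integral_const_mul, intervalIntegral.integral_add hgi hFgi]
    _ ≤ (√D)⁻¹ * (A + (√2 * A + 4 * B) / √β) := by
        gcongr; exact integral_inv_sqrt_sub_mul_le hβ hg hg0 hgB hgA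
    _ ≤ ((1 + √2) * A + 4 * B) / √(cosh β - 1) :=
        (inv_sqrt_exp_sub_one_div_two_mul_le hβ hA (by positivity)).trans_eq (by ring)

lemma abs_integral_diffraction_le {ρ β : ℝ} (hρ : 0 < ρ) (hβ : 0 < β) (φ₁ φ₂ : ℝ) :
    |∫ s in (0 : ℝ)..β, (√(cosh β - cosh s))⁻¹ *
        (sin φ₁ / (cosh (s / ρ) - cos φ₁) + sin φ₂ / (cosh (s / ρ) - cos φ₂))|
      ≤ ((1 + √2) * (2 * π * ρ) + 8 * ρ) / √(cosh β - 1) := by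
  have hc : 0 < 2 * ρ := by positivity
  set a₁ := sin (φ₁ / 2)
  set a₂ := sin (φ₂ / 2)
  have hcont₁ := continuous_abs_div_sq_add_sq a₁ (2 * ρ)
  have hcont₂ := continuous_abs_div_sq_add_sq a₂ (2 * ρ)
  refine (abs_integral_inv_sqrt_cosh_sub_cosh_mul_le
    (g := fun s => |a₁| / (a₁ ^ 2 + (s / (2 * ρ)) ^ 2) + |a₂| / (a₂ ^ 2 + (s / (2 * ρ)) ^ 2))
    (A := π * (2 * ρ) / 2 + π * (2 * ρ) / 2) (B := 2 * ρ / 2 + 2 * ρ / 2) hβ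
    (hcont₁.add hcont₂).continuousOn (fun s _ => by positivity) (fun s hs => ?_) ?_
    (fun s _ => (abs_add_le _ _).trans (add_le_add (abs_sin_div_cosh_sub_cos_le ρ φ₁ s)
      (abs_sin_div_cosh_sub_cos_le ρ φ₂ s)))).trans_eq (by ring)
  · rw [add_div]
    exact add_le_add (abs_div_sq_add_sq_le hc hs.1) (abs_div_sq_add_sq_le hc hs.1)
  · rw [intervalIntegral.integral_add (hcont₁.intervalIntegrable _ _)
      (hcont₂.intervalIntegrable _ _)]
    exact add_le_add (integral_abs_div_sq_add_sq_le a₁ β hc)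
      (integral_abs_div_sq_add_sq_le a₂ β hc)

/-- Lemma 3.3: pointwise bound on the diffractive part of the wave kernel on
the flat cone `C(S¹_ρ)`. -/
theorem stmt_1 : ∀ ρ : ℝ, 0 < ρ → ∃ C > (0:ℝ),
    ∀ r₁ r₂ : ℝ, 0 < r₁ → 0 < r₂ → ∀ t : ℝ, r₁ + r₂ < t → ∀ θ : ℝ,
    ∀ β : ℝ, 0 ≤ β → Real.cosh β = (t^2 - r₁^2 - r₂^2) / (2 * r₁ * r₂) →
    |((4 * π^2 * ρ)⁻¹ * (2 * r₁ * r₂) ^ (-(1/2) : ℝ)) *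
      ∫ s in (0:ℝ)..β,
        ((t^2 - r₁^2 - r₂^2) / (2 * r₁ * r₂) - Real.cosh s) ^ (-(1/2) : ℝ) *
          (Real.sin ((π + θ) / ρ) / (Real.cosh (s / ρ) - Real.cos ((π + θ) / ρ)) +
           Real.sin ((π - θ) / ρ) / (Real.cosh (s / ρ) - Real.cos ((π - θ) / ρ)))|
      ≤ C * (t^2 - (r₁ + r₂)^2) ^ (-(1/2) : ℝ) := by
  intro ρ hρ
  refine ⟨((1 + √2) * (2 * π) + 8) / (4 * π ^ 2), by positivity, ?_⟩
  intro r₁ r₂ hr₁ hr₂ t ht θ β hβ hcosh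
  have hr : 0 < 2 * r₁ * r₂ := by positivity
  have hgap : t ^ 2 - (r₁ + r₂) ^ 2 = 2 * r₁ * r₂ * (cosh β - 1) := by
    rw [hcosh]; field_simp; ring
  replace hβ : 0 < β := by
    have : 1 < cosh β := by rw [hcosh, one_lt_div hr]; nlinarith
    exact hβ.lt_of_ne (one_lt_cosh.mp this).symm
  simp only [← hcosh, rpow_neg_one_half_eq_inv_sqrt, hgap]
  rw [abs_mul, abs_of_nonneg (by positivity), sqrt_mul hr.le, mul_inv (√(2 * r₁ * r₂))]
  calc (4 * π ^ 2 * ρ)⁻¹ * (√(2 * r₁ * r₂))⁻¹ * |_|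
      ≤ (4 * π ^ 2 * ρ)⁻¹ * (√(2 * r₁ * r₂))⁻¹
          * (((1 + √2) * (2 * π * ρ) + 8 * ρ) / √(cosh β - 1)) := by
        gcongr; exact abs_integral_diffraction_le hρ hβ _ _
    _ = ((1 + √2) * (2 * π) + 8) / (4 * π ^ 2) * ((√(2 * r₁ * r₂))⁻¹ * (√(cosh β - 1))⁻¹) := by
        field_simp
end

section
/- For every ρ > 0 there exists a constant C > 0 such that for every α > 1, for β ≥ 0 the unique nonnegative real with cosh β = α, and for every φ ∈ ℝ, one has | ∫₀^β (α − cosh s)^{−1/2} · sin φ / (cosh(s/ρ) − cos φ) ds | ≤ C (α − 1)^{−1/2}. -/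
open MeasureTheory Real Set

/-! Since `cosh t - cos φ ≥ (b² + t²) / 2` and `|sin φ| ≤ b` for `b = 2 |sin (φ / 2)|`, the
trigonometric factor is dominated, uniformly in `φ`, by the Lorentzian `2b / (b² + t²)` at
`t = s / ρ`, whose integral over a half-line is at most `π` and which is at most `1 / t`.
Convexity of `cosh` gives `α - cosh s ≥ (α - 1) (β - s) / β` on `[0, β]`. On `[0, β / 2]` this
bounds the square-root factor by `2 (α - 1)^(-1/2)` and the Lorentzian contributes at most `π ρ`;
on `[β / 2, β]` the Lorentzian is at most `2 ρ / β` and `(β - s)^(-1/2)` has integral `2 √β`. -/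

lemma convexOn_cosh : ConvexOn ℝ univ cosh := by
  have h := (convexOn_exp.add (convexOn_exp.comp_linearMap (-LinearMap.id))).smul
    (by norm_num : (0:ℝ) ≤ 1 / 2)
  refine h.congr fun x _ => ?_
  simp only [LinearMap.coe_neg, LinearMap.id_coe, Pi.add_apply, Function.comp_apply, Pi.neg_apply,
    id_eq, smul_eq_mul, cosh_eq]
  ring

lemma cosh_le_secant {s β : ℝ} (hs : 0 ≤ s) (hsβ : s ≤ β) (hβ : 0 < β) :
    cosh s ≤ s / β * cosh β + (1 - s / β) := by
  have h := convexOn_cosh.2 (mem_univ β) (mem_univ 0) (div_nonneg hs hβ.le)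
    (sub_nonneg.2 ((div_le_one hβ).2 hsβ)) (add_sub_cancel _ _)
  simpa [div_mul_cancel₀ s hβ.ne'] using h

lemma one_add_sq_div_two_le_cosh (t : ℝ) : 1 + t ^ 2 / 2 ≤ cosh t := by
  have hsinh : (t / 2) ^ 2 ≤ sinh (t / 2) ^ 2 := by
    rw [← sq_abs, ← sq_abs (sinh _), abs_sinh]
    exact pow_le_pow_left₀ (abs_nonneg _) (self_le_sinh_iff.2 (abs_nonneg _)) 2
  have hcosh : cosh t = cosh (t / 2) ^ 2 + sinh (t / 2) ^ 2 := by
    rw [← cosh_two_mul, mul_div_cancel₀ t two_ne_zero]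
  nlinarith [cosh_sq' (t / 2)]

lemma two_mul_sin_half_sq_add_sq_div_two_le (φ t : ℝ) :
    2 * sin (φ / 2) ^ 2 + t ^ 2 / 2 ≤ cosh t - cos φ := by
  have hcos : cos φ = 1 - 2 * sin (φ / 2) ^ 2 := by
    rw [← mul_div_cancel₀ φ two_ne_zero, cos_two_mul, cos_sq']
    ring_nf
  linarith [one_add_sq_div_two_le_cosh t]

noncomputable def lorentzian (b t : ℝ) : ℝ := 2 * b / (b ^ 2 + t ^ 2)

lemma lorentzian_nonneg {b : ℝ} (hb : 0 ≤ b) (t : ℝ) : 0 ≤ lorentzian b t := by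
  unfold lorentzian; positivity

lemma lorentzian_le_inv {b t : ℝ} (ht : 0 < t) : lorentzian b t ≤ t⁻¹ := by
  rw [lorentzian, div_le_iff₀ (by positivity), inv_mul_eq_div, le_div_iff₀ ht]
  nlinarith [sq_nonneg (b - t)]

lemma continuous_lorentzian (b : ℝ) : Continuous (lorentzian b) := by
  rcases eq_or_ne b 0 with rfl | hb
  · exact (continuous_const (y := (0:ℝ))).congr fun t => by simp [lorentzian]
  · exact continuous_const.div (by fun_prop) fun t => by positivity

lemma integral_lorentzian (b T : ℝ) : ∫ t in 0..T, lorentzian b t = 2 * arctan (T / b) := by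
  rcases eq_or_ne b 0 with rfl | hb
  · simp [lorentzian]
  have hderiv (t : ℝ) : HasDerivAt (fun t => 2 * arctan (t / b)) (lorentzian b t) t := by
    refine ((((hasDerivAt_id' t).div_const b).arctan).const_mul 2).congr_deriv ?_
    rw [lorentzian]
    field_simp
  rw [intervalIntegral.integral_eq_sub_of_hasDerivAt (fun t _ => hderiv t)
    ((continuous_lorentzian b).intervalIntegrable _ _)]
  simp

lemma integral_lorentzian_comp_div_le {ρ : ℝ} (hρ : 0 < ρ) (b T : ℝ) :
    ∫ s in 0..T, lorentzian b (s / ρ) ≤ π * ρ := by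
  rw [intervalIntegral.integral_comp_div _ hρ.ne', zero_div, integral_lorentzian, smul_eq_mul]
  nlinarith [arctan_lt_pi_div_two (T / ρ / b)]

lemma abs_sin_div_cosh_sub_cos_le_lorentzian (φ t : ℝ) :
    |sin φ / (cosh t - cos φ)| ≤ lorentzian (2 * |sin (φ / 2)|) t := by
  have hsin : |sin φ| ≤ 2 * |sin (φ / 2)| := by
    rw [show sin φ = 2 * (sin (φ / 2) * cos (φ / 2)) by rw [← mul_assoc, ← sin_two_mul]; ring_nf,
      abs_mul, abs_mul, abs_two]
    exact mul_le_mul_of_nonneg_left (mul_le_of_le_one_right (abs_nonneg _) (abs_cos_le_one _))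
      zero_le_two
  have hden := two_mul_sin_half_sq_add_sq_div_two_le φ t
  rw [← sq_abs] at hden
  set a := |sin (φ / 2)|
  rw [abs_div, abs_of_nonneg (a := cosh t - cos φ) (by nlinarith), lorentzian]
  rcases (show 0 ≤ a from abs_nonneg _).eq_or_lt with ha | ha
  · rw [← ha] at hsin ⊢
    rw [le_antisymm (by linarith) (abs_nonneg (sin φ))]
    simp
  rw [div_le_div_iff₀ (by nlinarith) (by positivity)]
  nlinarith [mul_le_mul_of_nonneg_right hsin (by positivity : 0 ≤ (2 * a) ^ 2 + t ^ 2),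
    mul_le_mul_of_nonneg_left hden (by positivity : 0 ≤ 4 * a)]

lemma rpow_neg_half_cosh_sub_cosh_le {s β : ℝ} (hs : 0 ≤ s) (hsβ : s < β) :
    (cosh β - cosh s) ^ (-(1 / 2) : ℝ) ≤
      (cosh β - 1) ^ (-(1 / 2) : ℝ) * (β / (β - s)) ^ (1 / 2 : ℝ) := by
  have hβ : 0 < β := hs.trans_lt hsβ
  have hq : 0 < β / (β - s) := div_pos hβ (sub_pos.2 hsβ)
  have hcosh : 0 < cosh β - 1 := sub_pos.2 (one_lt_cosh.2 hβ.ne')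
  have hchord : (cosh β - 1) / (β / (β - s)) ≤ cosh β - cosh s := by
    have := cosh_le_secant hs hsβ.le hβ
    rw [div_div_eq_mul_div, div_le_iff₀ hβ]
    field_simp at this
    nlinarith
  calc (cosh β - cosh s) ^ (-(1 / 2) : ℝ)
      ≤ ((cosh β - 1) / (β / (β - s))) ^ (-(1 / 2) : ℝ) :=
        rpow_le_rpow_of_nonpos (div_pos hcosh hq) hchord (by norm_num)
    _ = (cosh β - 1) ^ (-(1 / 2) : ℝ) * (β / (β - s)) ^ (1 / 2 : ℝ) := by
        rw [div_rpow hcosh.le hq.le, rpow_neg hq.le, div_inv_eq_mul]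

noncomputable def diffractionMajorant (ρ β b s : ℝ) : ℝ :=
  2 * lorentzian b (s / ρ) + 2 * ρ / β * (β ^ (1 / 2 : ℝ) * (β - s) ^ (-(1 / 2) : ℝ))

lemma rpow_neg_half_mul_le_diffractionMajorant {ρ β b s L : ℝ} (hρ : 0 < ρ) (hb : 0 ≤ b)
    (hs : 0 < s) (hsβ : s ≤ β) (hL₀ : 0 ≤ L) (hL : L ≤ lorentzian b (s / ρ)) :
    (cosh β - cosh s) ^ (-(1 / 2) : ℝ) * L ≤
      (cosh β - 1) ^ (-(1 / 2) : ℝ) * diffractionMajorant ρ β b s := by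
  have hlor₀ := lorentzian_nonneg hb (s / ρ)
  rcases hsβ.eq_or_lt with rfl | hsβ
  · rw [sub_self, zero_rpow (by norm_num), zero_mul, diffractionMajorant, sub_self,
      zero_rpow (by norm_num), mul_zero, mul_zero, add_zero]
    exact mul_nonneg (rpow_nonneg (sub_nonneg.2 (one_le_cosh _)) _) (by linarith)
  set q := β / (β - s)
  have hβ : 0 < β := hs.trans hsβ
  have hq₁ : 1 ≤ q := (one_le_div (sub_pos.2 hsβ)).2 (by linarith)
  have hq : q ^ (1 / 2 : ℝ) = β ^ (1 / 2 : ℝ) * (β - s) ^ (-(1 / 2) : ℝ) := by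
    rw [div_rpow hβ.le (sub_pos.2 hsβ).le, rpow_neg (sub_pos.2 hsβ).le, div_eq_mul_inv]
  have hsqrt₀ : 0 ≤ q ^ (1 / 2 : ℝ) := rpow_nonneg (by linarith) _
  have key : q ^ (1 / 2 : ℝ) * L ≤ 2 * lorentzian b (s / ρ) + 2 * ρ / β * q ^ (1 / 2 : ℝ) := by
    rcases le_total s (β / 2) with hs₂ | hs₂
    · have hq₂ : q ^ (1 / 2 : ℝ) ≤ 2 := by
        refine (rpow_le_rpow_of_exponent_le hq₁ (by norm_num : (1 / 2 : ℝ) ≤ 1)).trans ?_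
        rw [rpow_one, div_le_iff₀ (sub_pos.2 hsβ)]
        linarith
      have : 0 ≤ 2 * ρ / β * q ^ (1 / 2 : ℝ) := by positivity
      nlinarith
    · have hL₂ : L ≤ 2 * ρ / β := by
        refine hL.trans ((lorentzian_le_inv (by positivity)).trans ?_)
        rw [inv_div, div_le_div_iff₀ hs hβ]
        nlinarith
      nlinarith
  calc (cosh β - cosh s) ^ (-(1 / 2) : ℝ) * L
      ≤ (cosh β - 1) ^ (-(1 / 2) : ℝ) * q ^ (1 / 2 : ℝ) * L :=
        mul_le_mul_of_nonneg_right (rpow_neg_half_cosh_sub_cosh_le hs.le hsβ) hL₀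
    _ ≤ (cosh β - 1) ^ (-(1 / 2) : ℝ) * diffractionMajorant ρ β b s := by
        rw [mul_assoc, diffractionMajorant, ← hq]
        exact mul_le_mul_of_nonneg_left key (rpow_nonneg (by linarith [one_le_cosh β]) _)

lemma intervalIntegrable_rpow_neg_half_sub (β : ℝ) :
    IntervalIntegrable (fun s => (β - s) ^ (-(1 / 2) : ℝ)) volume 0 β := by
  simpa using ((intervalIntegral.intervalIntegrable_rpow' (by norm_num : (-1 : ℝ) < -(1 / 2))
    (a := 0) (b := β)).comp_sub_left β).symm

lemma integral_rpow_neg_half_sub (β : ℝ) :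
    ∫ s in 0..β, (β - s) ^ (-(1 / 2) : ℝ) = 2 * β ^ (1 / 2 : ℝ) := by
  rw [intervalIntegral.integral_comp_sub_left (fun x => x ^ (-(1 / 2) : ℝ)), sub_self, sub_zero,
    integral_rpow (Or.inl (by norm_num))]
  norm_num
  ring

lemma intervalIntegrable_lorentzian_comp_div (b ρ β : ℝ) :
    IntervalIntegrable (fun s => lorentzian b (s / ρ)) volume 0 β :=
  ((continuous_lorentzian b).comp (continuous_id.div_const ρ)).intervalIntegrable _ _

lemma intervalIntegrable_diffractionMajorant (ρ β b : ℝ) :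
    IntervalIntegrable (diffractionMajorant ρ β b) volume 0 β :=
  ((intervalIntegrable_lorentzian_comp_div b ρ β).const_mul 2).add
    (((intervalIntegrable_rpow_neg_half_sub β).const_mul _).const_mul _)

lemma integral_diffractionMajorant_le {ρ β : ℝ} (hρ : 0 < ρ) (hβ : 0 < β) (b : ℝ) :
    ∫ s in 0..β, diffractionMajorant ρ β b s ≤ (2 * π + 4) * ρ := by
  have hsq : β ^ (1 / 2 : ℝ) * β ^ (1 / 2 : ℝ) = β := by
    rw [← rpow_add hβ]; norm_num
  unfold diffractionMajorant
  rw [intervalIntegral.integral_add ((intervalIntegrable_lorentzian_comp_div b ρ β).const_mul 2)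
      (((intervalIntegrable_rpow_neg_half_sub β).const_mul _).const_mul _),
    intervalIntegral.integral_const_mul, intervalIntegral.integral_const_mul,
    intervalIntegral.integral_const_mul, integral_rpow_neg_half_sub,
    mul_left_comm _ 2, hsq]
  have : 2 * ρ / β * (2 * β) = 4 * ρ := by field_simp; ring
  linarith [integral_lorentzian_comp_div_le hρ b β]

/-- Inequality (eqn:alphabound): uniform bound on the diffractive angular
integral for the wave propagator on the flat cone `C(S¹_ρ)`. -/
theorem stmt_2 : ∀ ρ : ℝ, 0 < ρ → ∃ C > (0:ℝ),
    ∀ α : ℝ, 1 < α → ∀ β : ℝ, 0 ≤ β → Real.cosh β = α → ∀ φ : ℝ,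
    |∫ s in (0:ℝ)..β, (α - Real.cosh s) ^ (-(1/2) : ℝ) *
        (Real.sin φ / (Real.cosh (s / ρ) - Real.cos φ))|
      ≤ C * (α - 1) ^ (-(1/2) : ℝ) := by
  intro ρ hρ
  refine ⟨(2 * π + 4) * ρ, by positivity, fun α hα β hβ hcβ φ => ?_⟩
  subst hcβ
  have hβ₀ : 0 < β := hβ.lt_of_ne (by rintro rfl; simp at hα)
  have hb : 0 ≤ 2 * |sin (φ / 2)| := by positivity
  have hbound : ∀ s ∈ Ioc 0 β, ‖(cosh β - cosh s) ^ (-(1 / 2) : ℝ) *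
      (sin φ / (cosh (s / ρ) - cos φ))‖ ≤
        (cosh β - 1) ^ (-(1 / 2) : ℝ) * diffractionMajorant ρ β (2 * |sin (φ / 2)|) s := by
    intro s hs
    have hcosh : cosh s ≤ cosh β := cosh_le_cosh.2 (by
      rw [abs_of_pos hs.1, abs_of_pos hβ₀]; exact hs.2)
    rw [Real.norm_eq_abs, abs_mul, abs_of_nonneg (rpow_nonneg (sub_nonneg.2 hcosh) _)]
    exact rpow_neg_half_mul_le_diffractionMajorant hρ hb hs.1 hs.2 (abs_nonneg _)
      (abs_sin_div_cosh_sub_cos_le_lorentzian φ _)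
  calc _ ≤ ∫ s in 0..β, (cosh β - 1) ^ (-(1 / 2) : ℝ) *
        diffractionMajorant ρ β (2 * |sin (φ / 2)|) s :=
        intervalIntegral.norm_integral_le_of_norm_le hβ (ae_of_all _ hbound)
          ((intervalIntegrable_diffractionMajorant ρ β _).const_mul _)
    _ ≤ (cosh β - 1) ^ (-(1 / 2) : ℝ) * ((2 * π + 4) * ρ) := by
        rw [intervalIntegral.integral_const_mul]
        exact mul_le_mul_of_nonneg_left (integral_diffractionMajorant_le hρ hβ₀ _)
          (rpow_nonneg (sub_nonneg.2 (one_le_cosh β)) _)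
    _ = _ := mul_comm _ _
end

section
/- There exists δ ∈ (0,1) such that for every β ≥ 1 and every s ∈ [0, max(β − tanh β, 1/2)], one has cosh s − 1 ≤ (1 − δ)(cosh β − 1). -/
open Real

lemma aux_half : Real.cosh (1/2) - 1 ≤ (3/4) * (Real.cosh 1 - 1) := by
  have h12 : Real.cosh (1/2) = (Real.exp (1/2) + Real.exp (-(1/2))) / 2 := Real.cosh_eq _
  have h1 : Real.cosh 1 = (Real.exp 1 + Real.exp (-1)) / 2 := Real.cosh_eq _
  set a := Real.exp (1/2) with ha
  have hap : 0 < a := Real.exp_pos _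
  have ha2 : Real.exp 1 = a ^ 2 := by
    rw [ha, sq, ← Real.exp_add]; norm_num
  have hainv : Real.exp (-(1/2)) = a⁻¹ := by rw [Real.exp_neg]
  have hainv2 : Real.exp (-1) = (a ^ 2)⁻¹ := by rw [Real.exp_neg, ha2]
  have hmul : a * a⁻¹ = 1 := mul_inv_cancel₀ (ne_of_gt hap)
  have ha15 : (3/2 : ℝ) ≤ a := by
    have := Real.add_one_le_exp (1/2 : ℝ); linarith
  rw [h12, h1, hainv, hainv2, ha2]
  have h2inv : (a ^ 2)⁻¹ = a⁻¹ * a⁻¹ := by rw [sq, mul_inv]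
  rw [h2inv]
  nlinarith [sq_nonneg (a - 1), sq_nonneg (a⁻¹ - 1), sq_nonneg (a - a⁻¹),
    mul_pos hap (inv_pos.mpr hap), sq_nonneg (a*a - 1), sq_nonneg (a - 3/2)]

lemma aux_34 : Real.cosh (3/4) - (3/4) * Real.sinh (3/4) ≤ 3/4 := by
  have hc : Real.cosh (3/4) = (Real.exp (3/4) + Real.exp (-(3/4))) / 2 := Real.cosh_eq _
  have hs : Real.sinh (3/4) = (Real.exp (3/4) - Real.exp (-(3/4))) / 2 := Real.sinh_eq _
  set b := Real.exp (3/4) with hb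
  have hbp : 0 < b := Real.exp_pos _
  have hbinv : Real.exp (-(3/4)) = b⁻¹ := by rw [Real.exp_neg]
  have hmul : b * b⁻¹ = 1 := mul_inv_cancel₀ (ne_of_gt hbp)
  have hlb : (7/4 : ℝ) ≤ b := by
    have := Real.add_one_le_exp (3/4 : ℝ); linarith
  have hub : b < 2.7182818286 := by
    have h1 : b < Real.exp 1 := by
      rw [hb]; exact Real.exp_lt_exp.mpr (by norm_num)
    exact h1.trans Real.exp_one_lt_d9
  rw [hc, hs, hbinv]
  -- need b/8 + 7/(8b) ≤ 3/4, i.e. b^2 - 6b + 7 ≤ 0 for b ∈ [7/4, 2.72]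
  nlinarith [mul_nonneg (sub_nonneg.mpr hlb) (le_of_lt (sub_pos.mpr hub)),
    inv_pos.mpr hbp]

/-- Verification of condition (eqn:smalls) for `M = max (β − tanh β) (1/2)`
in the regime `β ≥ 1`. -/
theorem stmt_6 : ∃ δ : ℝ, 0 < δ ∧ δ < 1 ∧
    ∀ β : ℝ, 1 ≤ β → ∀ s : ℝ, 0 ≤ s → s ≤ max (β - Real.tanh β) (1/2) →
      Real.cosh s - 1 ≤ (1 - δ) * (Real.cosh β - 1) := by
  refine ⟨1/4, by norm_num, by norm_num, ?_⟩
  intro β hβ s hs hsmax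
  have hcβ : Real.cosh 1 ≤ Real.cosh β := by
    rw [Real.cosh_le_cosh, abs_of_nonneg (by norm_num : (0:ℝ) ≤ 1),
      abs_of_nonneg (by linarith : (0:ℝ) ≤ β)]; exact hβ
  have hc1 : (1:ℝ) < Real.cosh 1 := Real.one_lt_cosh.mpr (by norm_num)
  rcases le_max_iff.mp hsmax with h | h
  · -- s ≤ β - tanh β
    -- show tanh β ≥ 3/4
    have heβ : Real.exp 1 ≤ Real.exp β := Real.exp_le_exp.mpr hβ
    have he1 : (2.7182818283 : ℝ) < Real.exp 1 := Real.exp_one_gt_d9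
    have hebp : 0 < Real.exp β := Real.exp_pos _
    have hsinh : (3/4) * Real.cosh β ≤ Real.sinh β := by
      rw [Real.cosh_eq, Real.sinh_eq, Real.exp_neg]
      have hinv : Real.exp β * (Real.exp β)⁻¹ = 1 := mul_inv_cancel₀ (ne_of_gt hebp)
      have h7 : (7 : ℝ) ≤ Real.exp β * Real.exp β := by nlinarith
      have hinvpos : 0 < (Real.exp β)⁻¹ := inv_pos.mpr hebp
      nlinarith
    have htanh : (3/4 : ℝ) ≤ Real.tanh β := by
      rw [Real.tanh_eq_sinh_div_cosh, le_div_iff₀ (Real.cosh_pos β)]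
      linarith
    have hs2 : s ≤ β - 3/4 := by linarith
    have hβ34 : (0:ℝ) ≤ β - 3/4 := by linarith
    have hcs : Real.cosh s ≤ Real.cosh (β - 3/4) := by
      rw [Real.cosh_le_cosh, abs_of_nonneg hs, abs_of_nonneg hβ34]; exact hs2
    rw [Real.cosh_sub] at hcs
    have hsinhβ : (3/4) * Real.cosh β ≤ Real.sinh β := by
      rw [Real.tanh_eq_sinh_div_cosh, le_div_iff₀ (Real.cosh_pos β)] at htanh
      linarith
    have hsinh34 : 0 ≤ Real.sinh (3/4) := Real.sinh_nonneg_iff.mpr (by norm_num)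
    have hcoshβpos : 0 < Real.cosh β := Real.cosh_pos β
    have key : Real.cosh β * Real.cosh (3/4) - Real.sinh β * Real.sinh (3/4)
        ≤ (3/4) * Real.cosh β := by
      have h1 : Real.sinh β * Real.sinh (3/4) ≥ (3/4) * Real.cosh β * Real.sinh (3/4) :=
        mul_le_mul_of_nonneg_right hsinhβ hsinh34
      have h2 : Real.cosh β * (Real.cosh (3/4) - (3/4) * Real.sinh (3/4))
          ≤ Real.cosh β * (3/4) := mul_le_mul_of_nonneg_left aux_34 (le_of_lt hcoshβpos)
      nlinarith
    have hcb1 : (1:ℝ) < Real.cosh β := lt_of_lt_of_le hc1 hcβ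
    nlinarith
  · -- s ≤ 1/2
    have hcs : Real.cosh s ≤ Real.cosh (1/2) := by
      rw [Real.cosh_le_cosh, abs_of_nonneg hs, abs_of_nonneg (by norm_num : (0:ℝ) ≤ (1/2:ℝ))]
      exact h
    have := aux_half
    nlinarith
end

section
/- There exists a constant C > 0 such that for every β ≥ 1, setting M = max(β − tanh β, 1/2), one has ∫_M^β (cosh β − cosh s)^{−1/2} ds ≤ C (cosh β − 1)^{−1/2}. -/
open MeasureTheory Real

lemma cosh_sub_cosh_aux (x y : ℝ) :
    Real.cosh x - Real.cosh y = 2 * Real.sinh ((x + y) / 2) * Real.sinh ((x - y) / 2) := by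
  have hx : Real.exp x = Real.exp ((x + y) / 2) * Real.exp ((x - y) / 2) := by
    rw [← Real.exp_add]; congr 1; ring
  have hy : Real.exp y = Real.exp ((x + y) / 2) * Real.exp (-((x - y) / 2)) := by
    rw [← Real.exp_add]; congr 1; ring
  have hnx : Real.exp (-x) = Real.exp (-((x + y) / 2)) * Real.exp (-((x - y) / 2)) := by
    rw [← Real.exp_add]; congr 1; ring
  have hny : Real.exp (-y) = Real.exp (-((x + y) / 2)) * Real.exp ((x - y) / 2) := by
    rw [← Real.exp_add]; congr 1; ring
  rw [Real.cosh_eq, Real.cosh_eq, Real.sinh_eq, Real.sinh_eq, hx, hy, hnx, hny]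
  ring

lemma key_numeric (β : ℝ) (hβ : 1 ≤ β) :
    Real.cosh β - 1 ≤ 16 * Real.sinh (β - 1 / 2) := by
  have hxy : Real.exp β = Real.exp (β - 1 / 2) * Real.exp (1 / 2) := by
    rw [← Real.exp_add]; congr 1; ring
  have hsq : Real.exp (1 / 2) * Real.exp (1 / 2) = Real.exp 1 := by
    rw [← Real.exp_add]; norm_num
  have he : Real.exp 1 < 2.7182818286 := Real.exp_one_lt_d9
  have hypos : (0 : ℝ) < Real.exp (1 / 2) := Real.exp_pos _
  have hy2 : Real.exp (1 / 2) < 1.7 := by nlinarith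
  have he2 : (2.7182818283 : ℝ) < Real.exp 1 := Real.exp_one_gt_d9
  have hy1 : (1.6 : ℝ) ≤ Real.exp (1 / 2) := by nlinarith
  have hz1 : Real.exp (1 / 2) ≤ Real.exp (β - 1 / 2) := Real.exp_le_exp.2 (by linarith)
  have hnb : Real.exp (-β) ≤ 1 := by
    have h := Real.exp_le_exp.2 (show -β ≤ 0 by linarith)
    rwa [Real.exp_zero] at h
  have hw1 : Real.exp (-(β - 1 / 2)) ≤ 1 := by
    have h := Real.exp_le_exp.2 (show -(β - 1 / 2) ≤ 0 by linarith)
    rwa [Real.exp_zero] at h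
  have hz16 : (1.6 : ℝ) ≤ Real.exp (β - 1 / 2) := le_trans hy1 hz1
  rw [Real.cosh_eq, Real.sinh_eq, hxy]
  nlinarith [mul_le_mul_of_nonneg_left hy2.le
    (le_trans (by norm_num : (0:ℝ) ≤ 1.6) hz16)]

/-- Tail estimate from the proof of Lemma 3.3: the integral over `[M, β)`
in (eqn:sinhintegral), with `M = max (β − tanh β) (1/2)`. -/
theorem stmt_8 : ∃ C > (0:ℝ), ∀ β : ℝ, 1 ≤ β →
    (∫ s in (max (β - Real.tanh β) (1/2))..β,
        (Real.cosh β - Real.cosh s) ^ (-(1/2) : ℝ))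
      ≤ C * (Real.cosh β - 1) ^ (-(1/2) : ℝ) := by
  refine ⟨8, by norm_num, fun β hβ => ?_⟩
  set M : ℝ := max (β - Real.tanh β) (1 / 2) with hMdef
  have hβ0 : (0 : ℝ) < β := by linarith
  have hcoshpos : (0 : ℝ) < Real.cosh β := Real.cosh_pos β
  have hsinhnn : 0 ≤ Real.sinh β := Real.sinh_nonneg_iff.2 hβ0.le
  have hsc : Real.sinh β < Real.cosh β := by
    have : Real.cosh β - Real.sinh β = Real.exp (-β) := by
      rw [Real.cosh_eq, Real.sinh_eq]; ring
    nlinarith [Real.exp_pos (-β)]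
  have htanh_nonneg : 0 ≤ Real.tanh β := by
    rw [Real.tanh_eq_sinh_div_cosh]; positivity
  have htanh_le : Real.tanh β ≤ 1 := by
    rw [Real.tanh_eq_sinh_div_cosh, div_le_one hcoshpos]; exact hsc.le
  have hMβ : M ≤ β := max_le (by linarith) (by linarith)
  have hM1 : β - 1 ≤ M := le_trans (by linarith) (le_max_left _ _)
  have hβM : β - M ≤ 1 := by linarith
  have hβM0 : (0 : ℝ) ≤ β - M := by linarith
  set c : ℝ := Real.sinh (β - 1 / 2) with hcdef
  have hc : 0 < c := Real.sinh_pos_iff.2 (by linarith)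
  -- pointwise lower bound on cosh β - cosh s
  have hpt : ∀ s ∈ Set.Icc M β, c * (β - s) ≤ Real.cosh β - Real.cosh s := by
    intro s hs
    rw [cosh_sub_cosh_aux β s]
    have h1 : β - 1 / 2 ≤ (β + s) / 2 := by linarith [hs.1]
    have h2 : c ≤ Real.sinh ((β + s) / 2) := Real.sinh_le_sinh.2 h1
    have h3 : (β - s) / 2 ≤ Real.sinh ((β - s) / 2) :=
      Real.self_le_sinh_iff.2 (by linarith [hs.2])
    calc c * (β - s) = 2 * c * ((β - s) / 2) := by ring
      _ ≤ 2 * Real.sinh ((β + s) / 2) * Real.sinh ((β - s) / 2) :=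
        mul_le_mul (by linarith) h3 (by linarith [hs.2]) (by linarith [hc.le])
  -- pointwise comparison of integrands
  have hfg : ∀ s ∈ Set.Icc M β,
      (Real.cosh β - Real.cosh s) ^ (-(1/2) : ℝ)
        ≤ c ^ (-(1/2) : ℝ) * (β - s) ^ (-(1/2) : ℝ) := by
    intro s hs
    rcases eq_or_lt_of_le hs.2 with h | h
    · rw [h]
      simp [Real.zero_rpow (show (-(1/2) : ℝ) ≠ 0 by norm_num)]
    · have hpos : 0 < c * (β - s) := mul_pos hc (by linarith)
      have h4 := Real.rpow_le_rpow_of_nonpos hpos (hpt s hs)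
        (by norm_num : (-(1/2) : ℝ) ≤ 0)
      rwa [Real.mul_rpow hc.le (by linarith : (0:ℝ) ≤ β - s)] at h4
  -- integrability of the dominating function
  have hig : IntervalIntegrable
      (fun s => c ^ (-(1/2) : ℝ) * (β - s) ^ (-(1/2) : ℝ)) volume M β := by
    apply IntervalIntegrable.const_mul
    have h0 : IntervalIntegrable (fun u : ℝ => u ^ (-(1/2) : ℝ)) volume (β - M) (β - β) :=
      intervalIntegral.intervalIntegrable_rpow' (by norm_num)
    have h2 := h0.comp_sub_left β
    simpa using h2
  -- integrability of the integrand
  have hif : IntervalIntegrable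
      (fun s => (Real.cosh β - Real.cosh s) ^ (-(1/2) : ℝ)) volume M β := by
    apply hig.mono_fun'
    · apply Measurable.aestronglyMeasurable
      exact (measurable_const.sub Real.continuous_cosh.measurable).pow measurable_const
    · rw [Set.uIoc_of_le hMβ]
      refine (ae_restrict_mem measurableSet_Ioc).mono fun s hs => ?_
      have hs' : s ∈ Set.Icc M β := Set.Ioc_subset_Icc_self hs
      have hnn : 0 ≤ (Real.cosh β - Real.cosh s) ^ (-(1/2) : ℝ) := by
        apply Real.rpow_nonneg
        have hMpos : (0:ℝ) < M := lt_of_lt_of_le (by norm_num) (le_max_right _ _)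
        have : Real.cosh s ≤ Real.cosh β := by
          rw [Real.cosh_le_cosh, abs_of_pos (lt_trans hMpos hs.1), abs_of_pos hβ0]
          exact hs.2
        linarith
      calc ‖(Real.cosh β - Real.cosh s) ^ (-(1/2) : ℝ)‖
          = (Real.cosh β - Real.cosh s) ^ (-(1/2) : ℝ) := by
            rw [Real.norm_eq_abs, abs_of_nonneg hnn]
        _ ≤ c ^ (-(1/2) : ℝ) * (β - s) ^ (-(1/2) : ℝ) := hfg s hs'
  -- value of the dominating integral
  have hval : (∫ s in M..β, (β - s) ^ (-(1/2) : ℝ)) = 2 * (β - M) ^ ((1/2) : ℝ) := by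
    rw [intervalIntegral.integral_comp_sub_left (fun u => u ^ (-(1/2) : ℝ)) β, sub_self,
      integral_rpow (Or.inl (by norm_num))]
    have h12 : (-(1/2) : ℝ) + 1 = 1 / 2 := by norm_num
    rw [h12, Real.zero_rpow (by norm_num)]
    ring
  have hstep1 : (∫ s in M..β, (Real.cosh β - Real.cosh s) ^ (-(1/2) : ℝ))
      ≤ ∫ s in M..β, c ^ (-(1/2) : ℝ) * (β - s) ^ (-(1/2) : ℝ) :=
    intervalIntegral.integral_mono_on hMβ hif hig hfg
  have hstep2 : (∫ s in M..β, c ^ (-(1/2) : ℝ) * (β - s) ^ (-(1/2) : ℝ))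
      = c ^ (-(1/2) : ℝ) * (2 * (β - M) ^ ((1/2) : ℝ)) := by
    rw [intervalIntegral.integral_const_mul, hval]
  have hroot : (β - M) ^ ((1/2) : ℝ) ≤ 1 :=
    Real.rpow_le_one hβM0 hβM (by norm_num)
  have hcnn : 0 ≤ c ^ (-(1/2) : ℝ) := Real.rpow_nonneg hc.le _
  have hstep3 : c ^ (-(1/2) : ℝ) * (2 * (β - M) ^ ((1/2) : ℝ)) ≤ c ^ (-(1/2) : ℝ) * 2 :=
    mul_le_mul_of_nonneg_left (by linarith) hcnn
  -- final comparison
  have hA : 0 < Real.cosh β - 1 := by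
    have := Real.one_lt_cosh.2 (by linarith : β ≠ 0)
    linarith
  have hkey : Real.cosh β - 1 ≤ 16 * c := key_numeric β hβ
  have hu : 0 < c ^ ((1/2) : ℝ) := Real.rpow_pos_of_pos hc _
  have hv : 0 < (Real.cosh β - 1) ^ ((1/2) : ℝ) := Real.rpow_pos_of_pos hA _
  have h16 : ((16 : ℝ)) ^ ((1/2) : ℝ) = 4 := by
    rw [show (16:ℝ) = 4 ^ (2:ℕ) by norm_num, ← Real.rpow_natCast 4 2,
      ← Real.rpow_mul (by norm_num : (0:ℝ) ≤ 4)]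
    norm_num
  have h1 : (Real.cosh β - 1) ^ ((1/2) : ℝ) ≤ 4 * c ^ ((1/2) : ℝ) := by
    calc (Real.cosh β - 1) ^ ((1/2) : ℝ) ≤ (16 * c) ^ ((1/2) : ℝ) :=
          Real.rpow_le_rpow hA.le hkey (by norm_num)
      _ = 4 * c ^ ((1/2) : ℝ) := by
          rw [Real.mul_rpow (by norm_num) hc.le, h16]
  have hfinal : c ^ (-(1/2) : ℝ) * 2 ≤ 8 * (Real.cosh β - 1) ^ (-(1/2) : ℝ) := by
    have h4 : 2 / c ^ ((1/2) : ℝ) ≤ 8 / (Real.cosh β - 1) ^ ((1/2) : ℝ) := by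
      rw [div_le_div_iff₀ hu hv]; nlinarith
    rw [Real.rpow_neg hc.le, Real.rpow_neg hA.le, inv_mul_eq_div, ← div_eq_mul_inv]
    exact h4
  calc (∫ s in M..β, (Real.cosh β - Real.cosh s) ^ (-(1/2) : ℝ))
      ≤ c ^ (-(1/2) : ℝ) * (2 * (β - M) ^ ((1/2) : ℝ)) := hstep2 ▸ hstep1
    _ ≤ c ^ (-(1/2) : ℝ) * 2 := hstep3
    _ ≤ 8 * (Real.cosh β - 1) ^ (-(1/2) : ℝ) := hfinal
end
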